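/- arXiv:2605.10909 — 2 statements merged into one kernel-verified Lean document; each statement's English description precedes it below -/
import Mathlib

section
/- Identify correlated policies π̃ with points of the probability simplex Δ(Π_det) ⊂ ℝ^{Π_det} (trivial parametrization) and assume J^{π̃,k}(μ) is differentiable in π̃. Let π̃_crit ∈ Δ(Π_det) be either a point where the gradient of J^{π̃,k}(μ) is zero or a local minimum of J^{π̃,k}(μ) on Δ(Π_det) (possibly on the boundary). Then E_{π_det ∼ π̃_crit}[J^{π_det}(μ)] − J^{π_det^*}(μ) ≤ 8 γ^k g_max / (1−γ), where π_det^* ∈ Π_det minimizes J^{π_det}(μ) over Π_det. -/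
open Finset

noncomputable section

variable {S A D : Type*} [Fintype S] [Fintype A] [Fintype D] [DecidableEq S]

/-- Transition matrix of a deterministic policy `pol`. -/
def detKernel (P : S → A → S → ℝ) (pol : S → A) : Matrix S S ℝ :=
  Matrix.of fun s s' => P s (pol s) s'

/-- Expected discounted cost incurred during the first `k` steps when following the
deterministic policy `pol` starting from state `s`. -/
def detCost (P : S → A → S → ℝ) (g : S → A → ℝ) (γ : ℝ) (pol : S → A) (k : ℕ) (s : S) : ℝ :=
  ∑ t ∈ Finset.range k, γ ^ t * ∑ s', (detKernel P pol ^ t) s s' * g s' (pol s')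

/-- Value function `J^{π_det}(s)` of a deterministic policy. -/
def detJ (P : S → A → S → ℝ) (g : S → A → ℝ) (γ : ℝ) (pol : S → A) (s : S) : ℝ :=
  ∑' t : ℕ, γ ^ t * ∑ s', (detKernel P pol ^ t) s s' * g s' (pol s')

/-- Value `J^{π_det}(μ)` of a deterministic policy from an initial distribution `μ`. -/
def detJInit (P : S → A → S → ℝ) (g : S → A → ℝ) (γ : ℝ) (pol : S → A) (μ : S → ℝ) : ℝ :=
  ∑ s, μ s * detJ P g γ pol s

/-- The `k`-step transition kernel of the correlated policy with weights `w`
over the family `p` of deterministic policies. -/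
def corKernel (P : S → A → S → ℝ) (p : D → S → A) (w : D → ℝ) (k : ℕ) : Matrix S S ℝ :=
  ∑ d, w d • (detKernel P (p d) ^ k)

/-- Expected discounted cost of one `k`-step block of the correlated policy from `s`. -/
def blockCost (P : S → A → S → ℝ) (g : S → A → ℝ) (γ : ℝ) (p : D → S → A) (w : D → ℝ)
    (k : ℕ) (s : S) : ℝ :=
  ∑ d, w d * detCost P g γ (p d) k s

/-- The `k`-step value function `J^{π̃,k}(s)` of the correlated policy `w`. -/
def Jk (P : S → A → S → ℝ) (g : S → A → ℝ) (γ : ℝ) (p : D → S → A) (w : D → ℝ)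
    (k : ℕ) (s : S) : ℝ :=
  ∑' m : ℕ, γ ^ (m * k) * ∑ s', (corKernel P p w k ^ m) s s' * blockCost P g γ p w k s'

/-- `J^{π̃,k}(μ)`. -/
def JkInit (P : S → A → S → ℝ) (g : S → A → ℝ) (γ : ℝ) (p : D → S → A) (w : D → ℝ)
    (k : ℕ) (μ : S → ℝ) : ℝ :=
  ∑ s, μ s * Jk P g γ p w k s

/-- The `k`-step Q-function `Q^{π̃,k}(s, π')` with deterministic second argument `pol`. -/
def Qk (P : S → A → S → ℝ) (g : S → A → ℝ) (γ : ℝ) (p : D → S → A) (w : D → ℝ)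
    (k : ℕ) (s : S) (pol : S → A) : ℝ :=
  detCost P g γ pol k s + γ ^ k * ∑ s', (detKernel P pol ^ k) s s' * Jk P g γ p w k s'

/-- The `k`-step Q-function `Q^{π̃,k}(s, π̃')` with correlated second argument `w'`. -/
def QkCor (P : S → A → S → ℝ) (g : S → A → ℝ) (γ : ℝ) (p : D → S → A) (w : D → ℝ)
    (k : ℕ) (s : S) (w' : D → ℝ) : ℝ :=
  ∑ d, w' d * Qk P g γ p w k s (p d)

/-- The `k`-step discounted state occupancy measure `d_μ^{π̃,k}(s)`. -/
def dOcc (P : S → A → S → ℝ) (γ : ℝ) (p : D → S → A) (w : D → ℝ) (k : ℕ)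
    (μ : S → ℝ) (s : S) : ℝ :=
  (1 - γ ^ k) * ∑' m : ℕ, γ ^ (m * k) * ∑ s0, μ s0 * (corKernel P p w k ^ m) s0 s

/-!
Write `β = γ ^ k`, `N_d = P_d ^ k` for the `k`-step kernel of `p d`, `K = ∑ d, w d • N_d` and
`R(T) = (1 - β • T)⁻¹`. All value functions are resolvents applied to `k`-step costs:
`J^d = R(N_d) c_d`, `J^{w,k} = R(K) c̄` with `c̄ = ∑ d, w d • c_d`, and `Q_d = c_d + β N_d J^{w,k}`.
The derivative of `w ↦ μ ⬝ᵥ R(K w) c̄ w` in direction `v` is `μ ⬝ᵥ R(K) (∑ d, v d • Q_d)`, so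
criticality on the simplex gives `μ ⬝ᵥ R(K) (Q_{d*} - J^{w,k}) ≥ 0`. Expanding resolvents into
geometric series of stochastic matrices, whose `n = 0` terms cancel, two comparisons follow:
`∑ d, w d * J^d(μ) - J^{w,k}(μ) ≤ 2 β G` and, by the performance-difference identity
`V - R(N) c = R(N) (V - c - β N V)`, `J^{w,k}(μ) - J^{d*}(μ) ≤ 4 β G / (1 - β)`, where
`G = gmax / (1 - γ)`. For `β < 1/4` they add up to at most `8 β G`; for `β ≥ 1/4` the bound
already follows from `|J^d(μ)| ≤ G`.
-/

open Matrix
open scoped Ring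

-- The ℓ∞ operator norm, for which row-stochastic matrices have norm at most one.
attribute [local instance] Matrix.linftyOpNormedAddCommGroup Matrix.linftyOpNormedRing
  Matrix.linftyOpNormedAlgebra

local instance : CompleteSpace (Matrix S S ℝ) := FiniteDimensional.complete ℝ _

set_option linter.unusedSectionVars false

theorem abs_dotProduct_le_of_mem_stdSimplex {ι : Type*} [Fintype ι] {q u : ι → ℝ} {C : ℝ}
    (hq : q ∈ stdSimplex ℝ ι) (hu : ∀ i, |u i| ≤ C) : |q ⬝ᵥ u| ≤ C :=
  calc |q ⬝ᵥ u| ≤ ∑ i, q i * |u i| := by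
        simpa only [dotProduct, abs_mul, abs_of_nonneg (hq.1 _)] using
          Finset.abs_sum_le_sum_abs (fun i => q i * u i) Finset.univ
    _ ≤ ∑ i, q i * C := Finset.sum_le_sum fun i _ => mul_le_mul_of_nonneg_left (hu i) (hq.1 i)
    _ = C := by rw [← Finset.sum_mul, hq.2, one_mul]

theorem abs_le_of_hasSum_pow_mul {β C x : ℝ} {f : ℕ → ℝ} (hβ0 : 0 ≤ β) (hβ1 : β < 1)
    (hf : HasSum (fun n => β ^ n * f n) x) (hC : ∀ n, |f n| ≤ C) : |x| ≤ C / (1 - β) := by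
  refine hf.norm_le_of_bounded ((hasSum_geometric_of_lt_one hβ0 hβ1).mul_left C) fun n => ?_
  rw [Real.norm_eq_abs, abs_mul, abs_of_nonneg (pow_nonneg hβ0 n), mul_comm]
  exact mul_le_mul_of_nonneg_right (hC n) (pow_nonneg hβ0 n)

theorem abs_le_of_hasSum_pow_mul_of_eq_zero {β C x : ℝ} {f : ℕ → ℝ} (hβ0 : 0 ≤ β)
    (hβ1 : β < 1) (hf : HasSum (fun n => β ^ n * f n) x) (h0 : f 0 = 0)
    (hC : ∀ n, |f n| ≤ C) : |x| ≤ C * β / (1 - β) := by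
  have hshift : HasSum (fun n => β ^ n * (β * f (n + 1))) x := by
    simpa [h0, pow_succ, mul_assoc, mul_left_comm] using (hasSum_nat_add_iff' 1).mpr hf
  refine abs_le_of_hasSum_pow_mul hβ0 hβ1 hshift fun n => ?_
  rw [abs_mul, abs_of_nonneg hβ0, mul_comm]
  exact mul_le_mul_of_nonneg_right (hC _) hβ0

theorem Ring.inverse_one_sub_eq_inverse_one_sub_pow_mul_geom_sum {R : Type*} [Ring R] {x : R}
    (n : ℕ) (hx : IsUnit (1 - x)) (hn : IsUnit (1 - x ^ n)) :
    (1 - x)⁻¹ʳ = (1 - x ^ n)⁻¹ʳ * ∑ i ∈ Finset.range n, x ^ i :=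
  calc (1 - x)⁻¹ʳ = (1 - x ^ n)⁻¹ʳ * (1 - x ^ n) * (1 - x)⁻¹ʳ := by
        rw [Ring.inverse_mul_cancel _ hn, one_mul]
    _ = (1 - x ^ n)⁻¹ʳ * ∑ i ∈ Finset.range n, x ^ i := by
        rw [← geom_sum_mul_neg, ← mul_assoc, Ring.mul_inverse_cancel_right _ _ hx]

section Stochastic

variable {M : Matrix S S ℝ} {q u : S → ℝ} {C : ℝ}

theorem row_mem_stdSimplex (hM : M ∈ rowStochastic ℝ S) (s : S) : M s ∈ stdSimplex ℝ S :=
  ⟨fun _ => hM.1 _ _, sum_row_of_mem_rowStochastic hM s⟩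

theorem vecMul_mem_stdSimplex (hM : M ∈ rowStochastic ℝ S) (hq : q ∈ stdSimplex ℝ S) :
    q ᵥ* M ∈ stdSimplex ℝ S :=
  ⟨nonneg_vecMul_of_mem_rowStochastic hM hq.1, by
    simpa only [dotProduct_one] using
      vecMul_dotProduct_one_eq_one_rowStochastic hM (by simpa only [dotProduct_one] using hq.2)⟩

theorem abs_mulVec_apply_le (hM : M ∈ rowStochastic ℝ S) (hu : ∀ s, |u s| ≤ C) (s : S) :
    |(M *ᵥ u) s| ≤ C :=
  abs_dotProduct_le_of_mem_stdSimplex (row_mem_stdSimplex hM s) hu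

theorem abs_dotProduct_mulVec_le (hM : M ∈ rowStochastic ℝ S) (hq : q ∈ stdSimplex ℝ S)
    (hu : ∀ s, |u s| ≤ C) : |q ⬝ᵥ (M *ᵥ u)| ≤ C := by
  rw [dotProduct_mulVec]
  exact abs_dotProduct_le_of_mem_stdSimplex (vecMul_mem_stdSimplex hM hq) hu

theorem norm_le_one_of_mem_rowStochastic (hM : M ∈ rowStochastic ℝ S) : ‖M‖ ≤ 1 := by
  rw [linfty_opNorm_def, NNReal.coe_le_one]
  refine Finset.sup_le fun s _ => ?_
  rw [← NNReal.coe_le_one, NNReal.coe_sum]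
  simp only [coe_nnnorm, Real.norm_eq_abs, abs_of_nonneg (hM.1 s _)]
  exact (sum_row_of_mem_rowStochastic hM s).le

theorem norm_smul_lt_one_of_mem_rowStochastic {β : ℝ} (hM : M ∈ rowStochastic ℝ S)
    (hβ0 : 0 ≤ β) (hβ1 : β < 1) : ‖β • M‖ < 1 := by
  rw [norm_smul, Real.norm_of_nonneg hβ0]
  nlinarith [norm_le_one_of_mem_rowStochastic hM, norm_nonneg M]

end Stochastic

section Resolvent

variable {β C : ℝ} {T T' : Matrix S S ℝ} {μ u : S → ℝ}

theorem hasSum_inverse_one_sub_smul_mulVec (hT : ‖β • T‖ < 1) (u : S → ℝ) :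
    HasSum (fun n => β ^ n • (T ^ n *ᵥ u)) ((1 - β • T)⁻¹ʳ *ᵥ u) := by
  simpa [Function.comp_def, smul_pow, smul_mulVec, mulVec.addMonoidHomLeft] using
    (hasSum_geom_series_inverse _ hT).map (mulVec.addMonoidHomLeft u)
      (continuous_id.matrix_mulVec continuous_const)

theorem hasSum_dotProduct_inverse_one_sub_smul_mulVec (hT : ‖β • T‖ < 1) (μ u : S → ℝ) :
    HasSum (fun n => β ^ n * (μ ⬝ᵥ (T ^ n *ᵥ u))) (μ ⬝ᵥ ((1 - β • T)⁻¹ʳ *ᵥ u)) := by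
  simpa [Function.comp_def, dotProduct_smul] using (hasSum_inverse_one_sub_smul_mulVec hT u).map
    (dotProductBilin ℝ ℝ μ : (S → ℝ) →+ ℝ) (continuous_const.dotProduct continuous_id)

theorem abs_inverse_one_sub_smul_mulVec_apply_le (hT : T ∈ rowStochastic ℝ S)
    (hβ0 : 0 ≤ β) (hβ1 : β < 1) (hu : ∀ s, |u s| ≤ C) (s : S) :
    |((1 - β • T)⁻¹ʳ *ᵥ u) s| ≤ C / (1 - β) :=
  abs_le_of_hasSum_pow_mul hβ0 hβ1 (Pi.hasSum.mp (hasSum_inverse_one_sub_smul_mulVec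
      (norm_smul_lt_one_of_mem_rowStochastic hT hβ0 hβ1) u) s)
    fun n => abs_mulVec_apply_le (pow_mem hT n) hu s

theorem abs_dotProduct_inverse_one_sub_smul_mulVec_sub_le (hT : T ∈ rowStochastic ℝ S)
    (hT' : T' ∈ rowStochastic ℝ S) (hβ0 : 0 ≤ β) (hβ1 : β < 1)
    (hμ : μ ∈ stdSimplex ℝ S) (hu : ∀ s, |u s| ≤ C) :
    |μ ⬝ᵥ ((1 - β • T)⁻¹ʳ *ᵥ u) - μ ⬝ᵥ ((1 - β • T')⁻¹ʳ *ᵥ u)| ≤ 2 * C * β / (1 - β) := by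
  have hsum := (hasSum_dotProduct_inverse_one_sub_smul_mulVec
      (norm_smul_lt_one_of_mem_rowStochastic hT hβ0 hβ1) μ u).sub
    (hasSum_dotProduct_inverse_one_sub_smul_mulVec
      (norm_smul_lt_one_of_mem_rowStochastic hT' hβ0 hβ1) μ u)
  simp only [← mul_sub] at hsum
  refine abs_le_of_hasSum_pow_mul_of_eq_zero hβ0 hβ1 hsum (by simp) fun n => ?_
  calc |μ ⬝ᵥ (T ^ n *ᵥ u) - μ ⬝ᵥ (T' ^ n *ᵥ u)|
      ≤ |μ ⬝ᵥ (T ^ n *ᵥ u)| + |μ ⬝ᵥ (T' ^ n *ᵥ u)| := abs_sub _ _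
    _ ≤ C + C := add_le_add (abs_dotProduct_mulVec_le (pow_mem hT n) hμ hu)
        (abs_dotProduct_mulVec_le (pow_mem hT' n) hμ hu)
    _ = 2 * C := by ring

theorem sum_mul_dotProduct_inverse_sub_le {w : D → ℝ} (hw : w ∈ stdSimplex ℝ D)
    {N : D → Matrix S S ℝ} (hN : ∀ d, N d ∈ rowStochastic ℝ S)
    (hT : T ∈ rowStochastic ℝ S) (hβ0 : 0 ≤ β) (hβ1 : β < 1) (hμ : μ ∈ stdSimplex ℝ S)
    {c : D → S → ℝ} (hc : ∀ d s, |c d s| ≤ C) :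
    ∑ d, w d * μ ⬝ᵥ ((1 - β • N d)⁻¹ʳ *ᵥ c d) - μ ⬝ᵥ ((1 - β • T)⁻¹ʳ *ᵥ ∑ d, w d • c d)
      ≤ 2 * C * β / (1 - β) := by
  have hmean := abs_dotProduct_le_of_mem_stdSimplex hw fun d =>
    abs_dotProduct_inverse_one_sub_smul_mulVec_sub_le (hN d) hT hβ0 hβ1 hμ (hc d)
  simp only [mulVec_sum, mulVec_smul, dotProduct_sum, dotProduct_smul, smul_eq_mul,
    ← Finset.sum_sub_distrib, ← mul_sub]
  exact (le_abs_self _).trans hmean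

theorem dotProduct_sub_dotProduct_inverse_le (hT : T ∈ rowStochastic ℝ S)
    (hT' : T' ∈ rowStochastic ℝ S) (hβ0 : 0 ≤ β) (hβ1 : β < 1)
    (hμ : μ ∈ stdSimplex ℝ S) {V c : S → ℝ} (hu : ∀ s, |(V - (c + β • (T *ᵥ V))) s| ≤ C)
    (hcrit : 0 ≤ μ ⬝ᵥ ((1 - β • T')⁻¹ʳ *ᵥ (c + β • (T *ᵥ V) - V))) :
    μ ⬝ᵥ V - μ ⬝ᵥ ((1 - β • T)⁻¹ʳ *ᵥ c) ≤ 2 * C * β / (1 - β) := by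
  set u := V - (c + β • (T *ᵥ V))
  have hunit := isUnit_one_sub_of_norm_lt_one (norm_smul_lt_one_of_mem_rowStochastic hT hβ0 hβ1)
  have hgap : V - (1 - β • T)⁻¹ʳ *ᵥ c = (1 - β • T)⁻¹ʳ *ᵥ u := by
    have : u = (1 - β • T) *ᵥ V - c := by
      simp only [u, sub_mulVec, one_mulVec, smul_mulVec]
      abel
    rw [this, mulVec_sub, mulVec_mulVec, Ring.inverse_mul_cancel _ hunit, one_mulVec]
  have hcrit' : μ ⬝ᵥ ((1 - β • T')⁻¹ʳ *ᵥ u) ≤ 0 := by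
    have : c + β • (T *ᵥ V) - V = -u := by simp only [u]; abel
    rw [this, mulVec_neg, dotProduct_neg] at hcrit
    linarith
  calc μ ⬝ᵥ V - μ ⬝ᵥ ((1 - β • T)⁻¹ʳ *ᵥ c) = μ ⬝ᵥ ((1 - β • T)⁻¹ʳ *ᵥ u) := by
        rw [← dotProduct_sub, hgap]
    _ ≤ μ ⬝ᵥ ((1 - β • T)⁻¹ʳ *ᵥ u) - μ ⬝ᵥ ((1 - β • T')⁻¹ʳ *ᵥ u) := by linarith
    _ ≤ 2 * C * β / (1 - β) :=
        (le_abs_self _).trans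
          (abs_dotProduct_inverse_one_sub_smul_mulVec_sub_le hT hT' hβ0 hβ1 hμ hu)

end Resolvent

-- `A'` is left untyped so that its type carries the normed-space instances on matrices; the
-- `show` below unfolds the derivative across the two defeq instance paths.
theorem HasFDerivAt.dotProduct_inverse_mulVec {E : Type*} [NormedAddCommGroup E]
    [NormedSpace ℝ E] {A : E → Matrix S S ℝ} {A'} {c : E → S → ℝ} {c' : E →L[ℝ] S → ℝ}
    {w : E} (hA : HasFDerivAt (𝕜 := ℝ) A A' w) (hc : HasFDerivAt c c' w) (hAw : IsUnit (A w))
    (μ : S → ℝ) :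
    ∃ L : E →L[ℝ] ℝ, HasFDerivAt (fun w => μ ⬝ᵥ ((A w)⁻¹ʳ *ᵥ c w)) L w ∧
      ∀ v, L v = μ ⬝ᵥ ((A w)⁻¹ʳ *ᵥ (c' v - A' v *ᵥ ((A w)⁻¹ʳ *ᵥ c w))) := by
  have hinv : HasFDerivAt Ring.inverse
      (-ContinuousLinearMap.mulLeftRight ℝ _ (A w)⁻¹ʳ (A w)⁻¹ʳ) (A w) := by
    simpa [← Ring.inverse_unit, hAw.unit_spec] using hasFDerivAt_ringInverse (𝕜 := ℝ) hAw.unit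
  have hAc := (mulVecBilin ℝ ℝ).toContinuousBilinearMap.hasFDerivAt_of_bilinear
    (hinv.comp w hA) hc
  refine ⟨_, (dotProductBilin ℝ ℝ μ).toContinuousLinearMap.hasFDerivAt.comp w hAc, fun v => ?_⟩
  show μ ⬝ᵥ ((A w)⁻¹ʳ *ᵥ c' v + -((A w)⁻¹ʳ * A' v * (A w)⁻¹ʳ) *ᵥ c w) = _
  rw [neg_mulVec, ← sub_eq_add_neg, mulVec_sub, ← mulVec_mulVec, ← mulVec_mulVec]

theorem HasFDerivAt.zero_le_apply_sub {E : Type*} [NormedAddCommGroup E] [NormedSpace ℝ E]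
    {f : E → ℝ} {f' : E →L[ℝ] ℝ} {s : Set E} {x y : E} (hf : HasFDerivAt f f' x)
    (hcrit : fderiv ℝ f x = 0 ∨ IsLocalMinOn f s x) (hs : Convex ℝ s) (hx : x ∈ s) (hy : y ∈ s) :
    0 ≤ f' (y - x) := by
  rcases hcrit with hzero | hmin
  · rw [← hf.fderiv, hzero, _root_.zero_apply]
  · exact hmin.hasFDerivWithinAt_nonneg hf.hasFDerivWithinAt
      (sub_mem_posTangentConeAt_of_segment_subset (hs.segment_subset hx hy))

section MDP

variable (P : S → A → S → ℝ) (g : S → A → ℝ) (γ gmax : ℝ) (p : D → S → A) (k : ℕ)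

theorem detKernel_mem_rowStochastic (hP : ∀ s a, (∀ s', 0 ≤ P s a s') ∧ ∑ s', P s a s' = 1)
    (pol : S → A) : detKernel P pol ∈ rowStochastic ℝ S :=
  mem_rowStochastic_iff_sum.2 ⟨fun s s' => (hP s (pol s)).1 s', fun s => (hP s (pol s)).2⟩

theorem corKernel_mem_rowStochastic (hP : ∀ s a, (∀ s', 0 ≤ P s a s') ∧ ∑ s', P s a s' = 1)
    {w : D → ℝ} (hw : w ∈ stdSimplex ℝ D) : corKernel P p w k ∈ rowStochastic ℝ S :=
  convex_rowStochastic.sum_mem (fun d _ => hw.1 d) hw.2 fun d _ =>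
    pow_mem (detKernel_mem_rowStochastic P hP (p d)) k

theorem blockCost_eq_sum_smul (w : D → ℝ) :
    blockCost P g γ p w k = ∑ d, w d • detCost P g γ (p d) k := by
  funext s
  simp [blockCost, Finset.sum_apply]

theorem detJ_eq_inverse_mulVec (hP : ∀ s a, (∀ s', 0 ≤ P s a s') ∧ ∑ s', P s a s' = 1)
    (hγ0 : 0 ≤ γ) (hγ1 : γ < 1) (pol : S → A) :
    detJ P g γ pol = (1 - γ • detKernel P pol)⁻¹ʳ *ᵥ fun s => g s (pol s) := by
  funext s
  exact (Pi.hasSum.1 (hasSum_inverse_one_sub_smul_mulVec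
    (norm_smul_lt_one_of_mem_rowStochastic (detKernel_mem_rowStochastic P hP pol) hγ0 hγ1) _)
    s).tsum_eq

theorem detJ_eq_inverse_pow_mulVec (hP : ∀ s a, (∀ s', 0 ≤ P s a s') ∧ ∑ s', P s a s' = 1)
    (hγ0 : 0 ≤ γ) (hγ1 : γ < 1) (hk : k ≠ 0) (pol : S → A) :
    detJ P g γ pol = (1 - γ ^ k • detKernel P pol ^ k)⁻¹ʳ *ᵥ detCost P g γ pol k := by
  have hN := detKernel_mem_rowStochastic P hP pol
  have h1 := isUnit_one_sub_of_norm_lt_one (norm_smul_lt_one_of_mem_rowStochastic hN hγ0 hγ1)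
  have hNk := isUnit_one_sub_of_norm_lt_one (norm_smul_lt_one_of_mem_rowStochastic
    (pow_mem hN k) (pow_nonneg hγ0 k) (pow_lt_one₀ hγ0 hγ1 hk))
  rw [← smul_pow] at hNk
  rw [detJ_eq_inverse_mulVec P g γ hP hγ0 hγ1,
    Ring.inverse_one_sub_eq_inverse_one_sub_pow_mul_geom_sum k h1 hNk, smul_pow,
    ← mulVec_mulVec]
  congr 1
  funext s
  simp only [detCost, sum_mulVec, Finset.sum_apply, smul_pow, smul_mulVec,
    Pi.smul_apply, smul_eq_mul]
  rfl

theorem Jk_eq_inverse_mulVec {w : D → ℝ} (hw : ‖γ ^ k • corKernel P p w k‖ < 1) :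
    Jk P g γ p w k = (1 - γ ^ k • corKernel P p w k)⁻¹ʳ *ᵥ blockCost P g γ p w k := by
  funext s
  rw [← (Pi.hasSum.1 (hasSum_inverse_one_sub_smul_mulVec hw _) s).tsum_eq]
  simp only [Jk, ← pow_mul, mul_comm k]
  rfl

theorem abs_detCost_le (hP : ∀ s a, (∀ s', 0 ≤ P s a s') ∧ ∑ s', P s a s' = 1)
    (hg : ∀ s a, |g s a| ≤ gmax) (hγ0 : 0 ≤ γ) (hγ1 : γ < 1) (pol : S → A) (s : S) :
    |detCost P g γ pol k s| ≤ (1 - γ ^ k) * (gmax / (1 - γ)) :=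
  calc |detCost P g γ pol k s|
      ≤ ∑ t ∈ Finset.range k, |γ ^ t * (detKernel P pol ^ t *ᵥ fun s => g s (pol s)) s| :=
        Finset.abs_sum_le_sum_abs _ _
    _ ≤ ∑ t ∈ Finset.range k, γ ^ t * gmax := Finset.sum_le_sum fun t _ => by
        rw [abs_mul, abs_of_nonneg (pow_nonneg hγ0 t)]
        exact mul_le_mul_of_nonneg_left (abs_mulVec_apply_le
          (pow_mem (detKernel_mem_rowStochastic P hP pol) t) (fun s => hg s (pol s)) s)
          (pow_nonneg hγ0 t)
    _ = (1 - γ ^ k) * (gmax / (1 - γ)) := by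
        rw [← Finset.sum_mul, geom_sum_eq hγ1.ne]
        field_simp [sub_ne_zero.2 hγ1.ne, sub_ne_zero.2 hγ1.ne']
        ring

theorem abs_blockCost_le (hP : ∀ s a, (∀ s', 0 ≤ P s a s') ∧ ∑ s', P s a s' = 1)
    (hg : ∀ s a, |g s a| ≤ gmax) (hγ0 : 0 ≤ γ) (hγ1 : γ < 1) {w : D → ℝ}
    (hw : w ∈ stdSimplex ℝ D) (s : S) :
    |blockCost P g γ p w k s| ≤ (1 - γ ^ k) * (gmax / (1 - γ)) :=
  abs_dotProduct_le_of_mem_stdSimplex hw fun d => abs_detCost_le P g γ gmax k hP hg hγ0 hγ1 (p d) s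

theorem abs_detJInit_le (hP : ∀ s a, (∀ s', 0 ≤ P s a s') ∧ ∑ s', P s a s' = 1)
    (hg : ∀ s a, |g s a| ≤ gmax) (hγ0 : 0 ≤ γ) (hγ1 : γ < 1) {μ : S → ℝ}
    (hμ : μ ∈ stdSimplex ℝ S) (pol : S → A) : |detJInit P g γ pol μ| ≤ gmax / (1 - γ) := by
  refine abs_dotProduct_le_of_mem_stdSimplex hμ fun s => ?_
  rw [detJ_eq_inverse_mulVec P g γ hP hγ0 hγ1]
  exact abs_inverse_one_sub_smul_mulVec_apply_le (detKernel_mem_rowStochastic P hP pol) hγ0 hγ1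
    (fun s => hg s (pol s)) s

theorem abs_Jk_le (hP : ∀ s a, (∀ s', 0 ≤ P s a s') ∧ ∑ s', P s a s' = 1)
    (hg : ∀ s a, |g s a| ≤ gmax) (hγ0 : 0 ≤ γ) (hγ1 : γ < 1) (hk : k ≠ 0) {w : D → ℝ}
    (hw : w ∈ stdSimplex ℝ D) (s : S) : |Jk P g γ p w k s| ≤ gmax / (1 - γ) := by
  have hβ1 : γ ^ k < 1 := pow_lt_one₀ hγ0 hγ1 hk
  have hK := corKernel_mem_rowStochastic P p k hP hw
  rw [Jk_eq_inverse_mulVec P g γ p k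
    (norm_smul_lt_one_of_mem_rowStochastic hK (pow_nonneg hγ0 k) hβ1)]
  convert abs_inverse_one_sub_smul_mulVec_apply_le hK (pow_nonneg hγ0 k) hβ1
    (abs_blockCost_le P g γ gmax p k hP hg hγ0 hγ1 hw) s using 1
  field_simp [(sub_pos.2 hβ1).ne']

theorem abs_Qk_le (hP : ∀ s a, (∀ s', 0 ≤ P s a s') ∧ ∑ s', P s a s' = 1)
    (hg : ∀ s a, |g s a| ≤ gmax) (hγ0 : 0 ≤ γ) (hγ1 : γ < 1) (hk : k ≠ 0) {w : D → ℝ}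
    (hw : w ∈ stdSimplex ℝ D) (s : S) (pol : S → A) :
    |Qk P g γ p w k s pol| ≤ gmax / (1 - γ) := by
  have hβ0 : 0 ≤ γ ^ k := pow_nonneg hγ0 k
  have hnext : |(detKernel P pol ^ k *ᵥ Jk P g γ p w k) s| ≤ gmax / (1 - γ) :=
    abs_mulVec_apply_le (pow_mem (detKernel_mem_rowStochastic P hP pol) k)
      (abs_Jk_le P g γ gmax p k hP hg hγ0 hγ1 hk hw) s
  calc |Qk P g γ p w k s pol|
      ≤ |detCost P g γ pol k s| + γ ^ k * |(detKernel P pol ^ k *ᵥ Jk P g γ p w k) s| :=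
        (abs_add_le _ _).trans_eq (by rw [abs_mul, abs_of_nonneg hβ0]; rfl)
    _ ≤ (1 - γ ^ k) * (gmax / (1 - γ)) + γ ^ k * (gmax / (1 - γ)) :=
        add_le_add (abs_detCost_le P g γ gmax k hP hg hγ0 hγ1 pol s)
          (mul_le_mul_of_nonneg_left hnext hβ0)
    _ = gmax / (1 - γ) := by ring

theorem QkCor_eq_blockCost_add (w v : D → ℝ) :
    (fun s => QkCor P g γ p w k s v) =
      blockCost P g γ p v k + γ ^ k • (corKernel P p v k *ᵥ Jk P g γ p w k) := by
  funext s
  simp only [QkCor, Qk, blockCost, corKernel, sum_mulVec, smul_mulVec, Pi.add_apply,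
    Pi.smul_apply, Finset.sum_apply, smul_eq_mul, mulVec, dotProduct]
  rw [Finset.mul_sum, ← Finset.sum_add_distrib]
  refine Finset.sum_congr rfl fun d _ => ?_
  ring

theorem QkCor_single [DecidableEq D] (w : D → ℝ) (s : S) (d : D) :
    QkCor P g γ p w k s (Pi.single d 1) = Qk P g γ p w k s (p d) := by
  simp [QkCor, Pi.single_apply]

theorem QkCor_self {w : D → ℝ} (hw : ‖γ ^ k • corKernel P p w k‖ < 1) :
    (fun s => QkCor P g γ p w k s w) = Jk P g γ p w k := by
  have hunit := isUnit_one_sub_of_norm_lt_one hw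
  rw [QkCor_eq_blockCost_add, Jk_eq_inverse_mulVec P g γ p k hw]
  set V := (1 - γ ^ k • corKernel P p w k)⁻¹ʳ *ᵥ blockCost P g γ p w k
  have hV : (1 - γ ^ k • corKernel P p w k) *ᵥ V = blockCost P g γ p w k := by
    rw [mulVec_mulVec, Ring.mul_inverse_cancel _ hunit, one_mulVec]
  rw [sub_mulVec, one_mulVec, smul_mulVec] at hV
  rw [← hV, sub_add_cancel]

theorem hasFDerivAt_JkInit (hP : ∀ s a, (∀ s', 0 ≤ P s a s') ∧ ∑ s', P s a s' = 1)
    (hγ0 : 0 ≤ γ) (hγ1 : γ < 1) (hk : k ≠ 0) {w : D → ℝ} (hw : w ∈ stdSimplex ℝ D)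
    (μ : S → ℝ) :
    ∃ L : (D → ℝ) →L[ℝ] ℝ, HasFDerivAt (fun w => JkInit P g γ p w k μ) L w ∧
      ∀ v, L v = μ ⬝ᵥ ((1 - γ ^ k • corKernel P p w k)⁻¹ʳ *ᵥ fun s => QkCor P g γ p w k s v) := by
  let K := (Fintype.linearCombination ℝ fun d => detKernel P (p d) ^ k).toContinuousLinearMap
  let C := (Fintype.linearCombination ℝ fun d => detCost P g γ (p d) k).toContinuousLinearMap
  have hK (v : D → ℝ) : K v = corKernel P p v k := Fintype.linearCombination_apply _ _ v
  have hC (v : D → ℝ) : C v = blockCost P g γ p v k :=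
    (Fintype.linearCombination_apply _ _ v).trans (blockCost_eq_sum_smul P g γ p k v).symm
  have hnorm : ‖γ ^ k • corKernel P p w k‖ < 1 := norm_smul_lt_one_of_mem_rowStochastic
    (corKernel_mem_rowStochastic P p k hP hw) (pow_nonneg hγ0 k) (pow_lt_one₀ hγ0 hγ1 hk)
  have hnear : ∀ᶠ w' in nhds w, ‖γ ^ k • K w'‖ < 1 :=
    ((K.continuous.const_smul (γ ^ k)).norm.continuousAt).eventually_lt continuousAt_const
      (show ‖γ ^ k • K w‖ < 1 by rwa [hK])
  have hF : (fun w => JkInit P g γ p w k μ) =ᶠ[nhds w]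
      fun w => μ ⬝ᵥ ((1 - γ ^ k • K w)⁻¹ʳ *ᵥ C w) := hnear.mono fun w' hw' => by
    rw [hK] at hw'
    simp only [hK, hC, ← Jk_eq_inverse_mulVec P g γ p k hw']
    rfl
  obtain ⟨L, hL, hLv⟩ := HasFDerivAt.dotProduct_inverse_mulVec
    ((K.hasFDerivAt.const_smul (γ ^ k)).const_sub 1) C.hasFDerivAt
    (show IsUnit (1 - γ ^ k • K w) by rw [hK]; exact isUnit_one_sub_of_norm_lt_one hnorm) μ
  refine ⟨L, hL.congr_of_eventuallyEq hF, fun v => ?_⟩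
  rw [hLv, QkCor_eq_blockCost_add, Jk_eq_inverse_mulVec P g γ p k hnorm]
  show μ ⬝ᵥ ((1 - γ ^ k • K w)⁻¹ʳ *ᵥ (C v - (-(γ ^ k • K v)) *ᵥ ((1 - γ ^ k • K w)⁻¹ʳ *ᵥ C w))) = _
  rw [hK, hK, hC, hC, neg_mulVec, sub_neg_eq_add, smul_mulVec]

theorem zero_le_dotProduct_inverse_mulVec_Qk_sub_Jk [DecidableEq D]
    (hP : ∀ s a, (∀ s', 0 ≤ P s a s') ∧ ∑ s', P s a s' = 1) (hγ0 : 0 ≤ γ) (hγ1 : γ < 1)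
    (hk : k ≠ 0) {w : D → ℝ} (hw : w ∈ stdSimplex ℝ D) {μ : S → ℝ}
    (hcrit : fderiv ℝ (fun w : D → ℝ => JkInit P g γ p w k μ) w = 0 ∨
      IsLocalMinOn (fun w : D → ℝ => JkInit P g γ p w k μ) (stdSimplex ℝ D) w) (d : D) :
    0 ≤ μ ⬝ᵥ ((1 - γ ^ k • corKernel P p w k)⁻¹ʳ *ᵥ
      ((fun s => Qk P g γ p w k s (p d)) - Jk P g γ p w k)) := by
  obtain ⟨L, hL, hLv⟩ := hasFDerivAt_JkInit P g γ p k hP hγ0 hγ1 hk hw μ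
  have hnorm : ‖γ ^ k • corKernel P p w k‖ < 1 := norm_smul_lt_one_of_mem_rowStochastic
    (corKernel_mem_rowStochastic P p k hP hw) (pow_nonneg hγ0 k) (pow_lt_one₀ hγ0 hγ1 hk)
  have h := hL.zero_le_apply_sub hcrit (convex_stdSimplex ℝ D) hw (single_mem_stdSimplex ℝ d)
  rw [map_sub, hLv, hLv, ← dotProduct_sub, ← mulVec_sub, QkCor_self P g γ p k hnorm] at h
  simpa only [QkCor_single] using h

theorem sum_mul_detJInit_sub_JkInit_le (hP : ∀ s a, (∀ s', 0 ≤ P s a s') ∧ ∑ s', P s a s' = 1)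
    (hg : ∀ s a, |g s a| ≤ gmax) (hγ0 : 0 ≤ γ) (hγ1 : γ < 1) (hk : k ≠ 0) {μ : S → ℝ}
    (hμ : μ ∈ stdSimplex ℝ S) {w : D → ℝ} (hw : w ∈ stdSimplex ℝ D) :
    ∑ d, w d * detJInit P g γ (p d) μ - JkInit P g γ p w k μ ≤ 2 * γ ^ k * (gmax / (1 - γ)) := by
  have hβ1 : γ ^ k < 1 := pow_lt_one₀ hγ0 hγ1 hk
  have hK := corKernel_mem_rowStochastic P p k hP hw
  have h := sum_mul_dotProduct_inverse_sub_le hw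
    (fun d => pow_mem (detKernel_mem_rowStochastic P hP (p d)) k) hK (pow_nonneg hγ0 k) hβ1 hμ
    (abs_detCost_le P g γ gmax k hP hg hγ0 hγ1 <| p ·)
  rw [← blockCost_eq_sum_smul, ← Jk_eq_inverse_mulVec P g γ p k
    (norm_smul_lt_one_of_mem_rowStochastic hK (pow_nonneg hγ0 k) hβ1)] at h
  simp only [← detJ_eq_inverse_pow_mulVec P g γ k hP hγ0 hγ1 hk] at h
  refine h.trans_eq ?_
  rw [show 2 * ((1 - γ ^ k) * (gmax / (1 - γ))) * γ ^ k =
      (1 - γ ^ k) * (2 * γ ^ k * (gmax / (1 - γ))) by ring,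
    mul_div_cancel_left₀ _ (sub_pos.2 hβ1).ne']

theorem JkInit_sub_detJInit_le (hP : ∀ s a, (∀ s', 0 ≤ P s a s') ∧ ∑ s', P s a s' = 1)
    (hg : ∀ s a, |g s a| ≤ gmax) (hγ0 : 0 ≤ γ) (hγ1 : γ < 1) (hk : k ≠ 0) {μ : S → ℝ}
    (hμ : μ ∈ stdSimplex ℝ S) {w : D → ℝ} (hw : w ∈ stdSimplex ℝ D) (pol : S → A)
    (hcrit : 0 ≤ μ ⬝ᵥ ((1 - γ ^ k • corKernel P p w k)⁻¹ʳ *ᵥ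
      ((fun s => Qk P g γ p w k s pol) - Jk P g γ p w k))) :
    JkInit P g γ p w k μ - detJInit P g γ pol μ ≤
      2 * (2 * (gmax / (1 - γ))) * γ ^ k / (1 - γ ^ k) := by
  have hu (s : S) :
      |(Jk P g γ p w k - fun s => Qk P g γ p w k s pol) s| ≤ 2 * (gmax / (1 - γ)) :=
    (abs_sub _ _).trans <| (two_mul (gmax / (1 - γ))).symm ▸ add_le_add
      (abs_Jk_le P g γ gmax p k hP hg hγ0 hγ1 hk hw s)
      (abs_Qk_le P g γ gmax p k hP hg hγ0 hγ1 hk hw s pol)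
  change μ ⬝ᵥ Jk P g γ p w k - μ ⬝ᵥ detJ P g γ pol ≤ _
  rw [detJ_eq_inverse_pow_mulVec P g γ k hP hγ0 hγ1 hk]
  exact dotProduct_sub_dotProduct_inverse_le (pow_mem (detKernel_mem_rowStochastic P hP pol) k)
    (corKernel_mem_rowStochastic P p k hP hw) (pow_nonneg hγ0 k) (pow_lt_one₀ hγ0 hγ1 hk) hμ hu
    hcrit

end MDP

theorem near_optimal_critical_points_general
    (P : S → A → S → ℝ) (g : S → A → ℝ) (γ gmax : ℝ) (μ : S → ℝ)
    (p : D → S → A) (k : ℕ) (wcrit : D → ℝ) (dstar : D)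
    (hP : ∀ s a, (∀ s', 0 ≤ P s a s') ∧ ∑ s', P s a s' = 1)
    (hg : ∀ s a, |g s a| ≤ gmax)
    (hγ0 : 0 < γ) (hγ1 : γ < 1)
    (hμ : μ ∈ stdSimplex ℝ S)
    (hk : 1 ≤ k)
    (hwcrit : wcrit ∈ stdSimplex ℝ D)
    (hcrit : fderiv ℝ (fun w : D → ℝ => JkInit P g γ p w k μ) wcrit = 0 ∨
      IsLocalMinOn (fun w : D → ℝ => JkInit P g γ p w k μ) (stdSimplex ℝ D) wcrit) :
    (∑ d, wcrit d * detJInit P g γ (p d) μ) - detJInit P g γ (p dstar) μ ≤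
      8 * γ ^ k * gmax / (1 - γ) := by
  classical
  have hJ := abs_detJInit_le P g γ gmax hP hg hγ0.le hγ1 hμ
  have hG : 0 ≤ gmax / (1 - γ) := (abs_nonneg _).trans (hJ (p dstar))
  rw [mul_div_assoc]
  rcases le_or_gt (1 / 4) (γ ^ k) with hβ | hβ
  · have hmean : ∑ d, wcrit d * detJInit P g γ (p d) μ ≤ gmax / (1 - γ) :=
      (le_abs_self _).trans (abs_dotProduct_le_of_mem_stdSimplex hwcrit fun d => hJ (p d))
    have hstar := neg_le_of_abs_le (hJ (p dstar))
    nlinarith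
  · have hk0 : k ≠ 0 := Nat.one_le_iff_ne_zero.mp hk
    have hdecor := sum_mul_detJInit_sub_JkInit_le P g γ gmax p k hP hg hγ0.le hγ1 hk0 hμ hwcrit
    have hperf := JkInit_sub_detJInit_le P g γ gmax p k hP hg hγ0.le hγ1 hk0 hμ hwcrit (p dstar)
      (zero_le_dotProduct_inverse_mulVec_Qk_sub_Jk P g γ p k hP hγ0.le hγ1 hk0 hwcrit hcrit dstar)
    have hsmall :
        2 * (2 * (gmax / (1 - γ))) * γ ^ k / (1 - γ ^ k) ≤ 6 * γ ^ k * (gmax / (1 - γ)) := by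
      rw [div_le_iff₀ (by linarith)]
      nlinarith [mul_nonneg hG (pow_nonneg hγ0.le k)]
    linarith

/-- **Near-optimality of critical points of the k-step objective** (trivial
parametrization of correlated policies as points of the simplex `Δ(Π_det) ⊂ ℝ^{Π_det}`).
If `π̃_crit ∈ Δ(Π_det)` is either a zero-gradient point of `π̃ ↦ J^{π̃,k}(μ)` or a local
minimum of it on the simplex (possibly on the boundary), then
`E_{π_det ∼ π̃_crit}[J^{π_det}(μ)] − J^{π_det^*}(μ) ≤ 8 γ^k g_max / (1−γ)`, where
`π_det^*` minimizes `J^{π_det}(μ)` over `Π_det`. -/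
theorem near_optimal_critical_points
    (P : S → A → S → ℝ) (g : S → A → ℝ) (γ gmax : ℝ) (μ : S → ℝ)
    (p : D → S → A) (k : ℕ) (wcrit : D → ℝ) (dstar : D)
    (hP : ∀ s a, (∀ s', 0 ≤ P s a s') ∧ ∑ s', P s a s' = 1)
    (hg : ∀ s a, |g s a| ≤ gmax)
    (hγ0 : 0 < γ) (hγ1 : γ < 1)
    (hμ : μ ∈ stdSimplex ℝ S)
    (hk : 1 ≤ k)
    (hwcrit : wcrit ∈ stdSimplex ℝ D)
    (hdiff : DifferentiableAt ℝ (fun w : D → ℝ => JkInit P g γ p w k μ) wcrit)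
    (hcrit : fderiv ℝ (fun w : D → ℝ => JkInit P g γ p w k μ) wcrit = 0 ∨
      IsLocalMinOn (fun w : D → ℝ => JkInit P g γ p w k μ) (stdSimplex ℝ D) wcrit)
    (hstar : ∀ d, detJInit P g γ (p dstar) μ ≤ detJInit P g γ (p d) μ) :
    (∑ d, wcrit d * detJInit P g γ (p d) μ) - detJInit P g γ (p dstar) μ ≤
      8 * γ ^ k * gmax / (1 - γ) :=
  near_optimal_critical_points_general P g γ gmax μ p k wcrit dstar hP hg hγ0 hγ1 hμ hk hwcrit hcrit

end
end

section
/- Let f be a differentiable, β-smooth function (with respect to a norm ‖·‖) on a convex set C in a finite-dimensional normed space, let Φ be a differentiable, λ-strongly convex mirror map on C with Bregman divergence D_Φ, and let x_{t+1} = argmin_{x ∈ C} ⟨∇f(x_t), x⟩ + (1/η) D_Φ(x, x_t) be one mirror descent step with learning rate η = λ/β (assume the argmin exists). Then f(x_{t+1}) − f(x_t) ≤ −(λ/(2η)) ‖x_{t+1} − x_t‖². (Descent lemma for mirror descent.) -/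
/-!
The first-order optimality condition of the mirror step, tested at `x₀`, bounds
`∇f(x₀)(x₁ - x₀)` by `-(1/η) (∇Φ(x₁) - ∇Φ(x₀))(x₁ - x₀)`, and strong convexity makes the
symmetrised Bregman divergence `(∇Φ(x₁) - ∇Φ(x₀))(x₁ - x₀)` at least `λ ‖x₁ - x₀‖²`.
So the linear term decreases by `(λ/η) ‖x₁ - x₀‖² = β ‖x₁ - x₀‖²`, and `β`-smoothness
gives back only half of it.
-/

noncomputable section

/-- Bregman divergence `D_Φ(x,y) = Φ(x) − Φ(y) − ⟨∇Φ(y), x − y⟩`, where the pairing with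
the gradient of the differentiable mirror map `Φ` is expressed via its Fréchet derivative. -/
def breg {E : Type*} [NormedAddCommGroup E] [NormedSpace ℝ E] (Φ : E → ℝ) (x y : E) : ℝ :=
  Φ x - Φ y - fderiv ℝ Φ y (x - y)

section

variable {E : Type*} [NormedAddCommGroup E] [NormedSpace ℝ E]

theorem breg_add_breg_swap (Φ : E → ℝ) (x y : E) :
    breg Φ x y + breg Φ y x = (fderiv ℝ Φ x - fderiv ℝ Φ y) (x - y) := by
  rw [breg, breg, ← neg_sub x y, map_neg, sub_apply]
  ring

theorem half_mul_sq_norm_le_breg {C : Set E} {Φ : E → ℝ} {lam : ℝ}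
    (hsc : ∀ a ∈ C, ∀ b ∈ C, Φ a + fderiv ℝ Φ a (b - a) + lam / 2 * ‖b - a‖ ^ 2 ≤ Φ b)
    {x y : E} (hx : x ∈ C) (hy : y ∈ C) :
    lam / 2 * ‖x - y‖ ^ 2 ≤ breg Φ x y := by
  have := hsc y hy x hx
  rw [breg]
  linarith

theorem mul_sq_norm_le_fderiv_sub_fderiv_apply {C : Set E} {Φ : E → ℝ} {lam : ℝ}
    (hsc : ∀ a ∈ C, ∀ b ∈ C, Φ a + fderiv ℝ Φ a (b - a) + lam / 2 * ‖b - a‖ ^ 2 ≤ Φ b)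
    {x y : E} (hx : x ∈ C) (hy : y ∈ C) :
    lam * ‖x - y‖ ^ 2 ≤ (fderiv ℝ Φ x - fderiv ℝ Φ y) (x - y) := by
  have hxy := half_mul_sq_norm_le_breg hsc hx hy
  have hyx := half_mul_sq_norm_le_breg hsc hy hx
  rw [norm_sub_rev] at hyx
  linarith [breg_add_breg_swap Φ x y]

theorem hasFDerivAt_breg_left {Φ : E → ℝ} {x : E} (hΦ : DifferentiableAt ℝ Φ x) (y : E) :
    HasFDerivAt (fun z => breg Φ z y) (fderiv ℝ Φ x - fderiv ℝ Φ y) x := by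
  have hlin : HasFDerivAt (fun z => fderiv ℝ Φ y (z - y)) (fderiv ℝ Φ y) x := by
    simpa only [map_sub] using (fderiv ℝ Φ y).hasFDerivAt.sub_const (fderiv ℝ Φ y y)
  exact (hΦ.hasFDerivAt.sub_const (Φ y)).sub hlin

theorem IsMinOn.mirror_step_optimality {C : Set E} (hC : Convex ℝ C) {Φ : E → ℝ}
    {g : E →L[ℝ] ℝ} {u : ℝ} {x₀ x₁ y : E}
    (hmin : IsMinOn (fun x => g x + u * breg Φ x x₀) C x₁)
    (hΦ : DifferentiableAt ℝ Φ x₁) (hx₁ : x₁ ∈ C) (hy : y ∈ C) :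
    0 ≤ g (y - x₁) + u * (fderiv ℝ Φ x₁ - fderiv ℝ Φ x₀) (y - x₁) := by
  have hderiv := g.hasFDerivAt.add ((hasFDerivAt_breg_left hΦ x₀).const_mul u)
  simpa using hmin.localize.hasFDerivWithinAt_nonneg hderiv.hasFDerivWithinAt
    (sub_mem_posTangentConeAt_of_segment_subset (hC.segment_subset hx₁ hy))

theorem IsMinOn.mirror_step_apply_sub_le {C : Set E} (hC : Convex ℝ C) {Φ : E → ℝ}
    {g : E →L[ℝ] ℝ} {u lam : ℝ} {x₀ x₁ : E}
    (hmin : IsMinOn (fun x => g x + u * breg Φ x x₀) C x₁)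
    (hΦ : DifferentiableAt ℝ Φ x₁) (hsc : ∀ a ∈ C, ∀ b ∈ C,
      Φ a + fderiv ℝ Φ a (b - a) + lam / 2 * ‖b - a‖ ^ 2 ≤ Φ b)
    (hu : 0 ≤ u) (hx₀ : x₀ ∈ C) (hx₁ : x₁ ∈ C) :
    g (x₁ - x₀) ≤ -(u * lam) * ‖x₁ - x₀‖ ^ 2 := by
  have hopt := hmin.mirror_step_optimality hC hΦ hx₁ hx₀
  have hmono := mul_le_mul_of_nonneg_left
    (mul_sq_norm_le_fderiv_sub_fderiv_apply hsc hx₁ hx₀) hu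
  rw [← neg_sub x₁ x₀, map_neg, map_neg] at hopt
  linarith

end

theorem mirror_descent_descent_lemma_general
    {E : Type*} [NormedAddCommGroup E] [NormedSpace ℝ E]
    (C : Set E) (f Φ : E → ℝ) (β lam η : ℝ) (x₀ x₁ : E)
    (hC : Convex ℝ C)
    (hsmooth : ∀ a ∈ C, ∀ b ∈ C,
      f b ≤ f a + fderiv ℝ f a (b - a) + β / 2 * ‖b - a‖ ^ 2)
    (hΦ : Differentiable ℝ Φ)
    (hsc : ∀ a ∈ C, ∀ b ∈ C,
      Φ a + fderiv ℝ Φ a (b - a) + lam / 2 * ‖b - a‖ ^ 2 ≤ Φ b)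
    (hβ : 0 < β) (hlam : 0 < lam) (hη : η = lam / β)
    (hx₀ : x₀ ∈ C) (hx₁ : x₁ ∈ C)
    (hmin : ∀ y ∈ C,
      fderiv ℝ f x₀ x₁ + (1 / η) * breg Φ x₁ x₀ ≤
        fderiv ℝ f x₀ y + (1 / η) * breg Φ y x₀) :
    f x₁ - f x₀ ≤ -(lam / (2 * η)) * ‖x₁ - x₀‖ ^ 2 := by
  have hlinear := IsMinOn.mirror_step_apply_sub_le (g := fderiv ℝ f x₀) hC
    (isMinOn_iff.2 hmin) (hΦ x₁) hsc (by rw [hη]; positivity) hx₀ hx₁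
  have hrate : 1 / η * lam = β := by rw [hη]; field_simp
  have hhalf : lam / (2 * η) = β / 2 := by rw [hη]; field_simp
  rw [hrate] at hlinear
  rw [hhalf]
  linarith [hsmooth x₀ hx₀ x₁ hx₁]

/-- **Descent lemma for mirror descent.**
Let `f` be differentiable and `β`-smooth on a convex set `C` in a finite-dimensional
normed space, `Φ` a differentiable `λ`-strongly convex mirror map, and let `x₁` be one
mirror descent step from `x₀ ∈ C` with learning rate `η = λ/β` (i.e. `x₁` minimizes
`x ↦ ⟨∇f(x₀), x⟩ + (1/η) D_Φ(x, x₀)` over `C`). Then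
`f(x₁) − f(x₀) ≤ −(λ/(2η)) ‖x₁ − x₀‖²`. -/
theorem mirror_descent_descent_lemma
    {E : Type*} [NormedAddCommGroup E] [NormedSpace ℝ E] [FiniteDimensional ℝ E]
    (C : Set E) (f Φ : E → ℝ) (β lam η : ℝ) (x₀ x₁ : E)
    (hC : Convex ℝ C)
    (hf : Differentiable ℝ f)
    (hsmooth : ∀ a ∈ C, ∀ b ∈ C,
      f b ≤ f a + fderiv ℝ f a (b - a) + β / 2 * ‖b - a‖ ^ 2)
    (hΦ : Differentiable ℝ Φ)
    (hsc : ∀ a ∈ C, ∀ b ∈ C,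
      Φ a + fderiv ℝ Φ a (b - a) + lam / 2 * ‖b - a‖ ^ 2 ≤ Φ b)
    (hβ : 0 < β) (hlam : 0 < lam) (hη : η = lam / β)
    (hx₀ : x₀ ∈ C) (hx₁ : x₁ ∈ C)
    (hmin : ∀ y ∈ C,
      fderiv ℝ f x₀ x₁ + (1 / η) * breg Φ x₁ x₀ ≤
        fderiv ℝ f x₀ y + (1 / η) * breg Φ y x₀) :
    f x₁ - f x₀ ≤ -(lam / (2 * η)) * ‖x₁ - x₀‖ ^ 2 :=
  mirror_descent_descent_lemma_general C f Φ β lam η x₀ x₁ hC hsmooth hΦ hsc hβ hlam hη hx₀ hx₁ hmin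

end
end
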